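/- Let H be a Hilbert space and suppose φ is an eigenfunction of a symmetric form a with eigenvalue λ_N on a subspace dom₀, i.e. a(φ, w) = λ_N⟨φ, w⟩ + F(w) for all w in a larger space dom₁ ⊇ dom₀, where F is a bounded linear functional vanishing on dom₀. Suppose u is an eigenvector on dom₁: a(u, w) = λ^ε⟨u, w⟩ for all w ∈ dom₁. Then F(u) = (λ_N − λ^ε)⟨φ, u⟩, and consequently λ^ε · ‖F‖² ≥ λ^ε · (F(u))²/a(u,u) = ((λ_N − λ^ε)⟨φ, u⟩)²·(λ^ε / a(u,u)) with a(u,u) = λ^ε‖u‖², giving ‖F‖² ≥ ((λ_N − λ^ε)⟨φ,u⟩)²/(λ^ε‖u‖²). -/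
import Mathlib

open RealInnerProductSpace in
theorem stmt17 {H : Type*} [NormedAddCommGroup H] [InnerProductSpace ℝ H]
    (a : H →ₗ[ℝ] H →ₗ[ℝ] ℝ) (hsymm : ∀ x y : H, a x y = a y x)
    (F : H →L[ℝ] ℝ)
    (dom₀ dom₁ : Submodule ℝ H) (hdom : dom₀ ≤ dom₁)
    (lamN lamε : ℝ) (hlamε : 0 < lamε)
    (φ : H) (hφ : φ ∈ dom₀)
    (heig : ∀ w ∈ dom₁, a φ w = lamN * ⟪φ, w⟫ - F w)
    (hF0 : ∀ w ∈ dom₀, F w = 0)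
    (u : H) (hu : u ∈ dom₁) (hu0 : u ≠ 0)
    (heigu : ∀ w ∈ dom₁, a u w = lamε * ⟪u, w⟫) :
    F u = (lamN - lamε) * ⟪φ, u⟫ ∧
    ∀ T : ℝ, (∀ w ∈ dom₁, (F w) ^ 2 ≤ T * a w w) →
      ((lamN - lamε) * ⟪φ, u⟫) ^ 2 / (lamε * ‖u‖ ^ 2) ≤ T := by
  have hφ1 : φ ∈ dom₁ := hdom hφ
  have h1 : a φ u = lamε * ⟪φ, u⟫ := by
    rw [hsymm, heigu φ hφ1, real_inner_comm]
  have hFu : F u = (lamN - lamε) * ⟪φ, u⟫ := by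
    have := heig u hu
    rw [h1] at this
    linarith
  refine ⟨hFu, fun T hT => ?_⟩
  have hauu : a u u = lamε * ‖u‖ ^ 2 := by
    rw [heigu u hu, real_inner_self_eq_norm_sq]
  have hpos : 0 < lamε * ‖u‖ ^ 2 := mul_pos hlamε (pow_pos (norm_pos_iff.mpr hu0) 2)
  rw [div_le_iff₀ hpos, ← hFu, ← hauu]
  exact hT u hu
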